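/- arXiv:1912.02429 — 3 statements merged into one kernel-verified Lean document; each statement's English description precedes it below -/
import Mathlib

section
/- For n ≥ 0 and k ≥ 0, let p_k(n) be the number of pairs (λ, R) where λ is a partition of n into distinct positive parts and R is a k-element set of rafts of λ (so p_0(n) is the number of partitions of n into distinct parts), and let r(n) be the number of partitions of n into distinct positive parts no two of which are consecutive integers. Then for every n ≥ 0, ∑_{k=0}^{∞} (−1)^k p_k(n) = r(n). (The sum is finite since p_k(n) = 0 for all sufficiently large k.) -/
open Finset

/-- Finite q-Pochhammer symbol: (a;q)_n = ∏_{j=0}^{n-1} (1 - a q^j). -/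
noncomputable def qPoch (a q : ℂ) (n : ℕ) : ℂ := ∏ j ∈ Finset.range n, (1 - a * q ^ j)

/-- Infinite q-Pochhammer symbol: (a;q)_∞ = ∏_{j=0}^{∞} (1 - a q^j). -/
noncomputable def qPochInf (a q : ℂ) : ℂ := ∏' j : ℕ, (1 - a * q ^ j)

/-- Gaussian binomial coefficient [N choose j]_q, as a rational function of q;
for 0 < |q| < 1 (and for |q⁻¹| > 1) this agrees with the q-binomial polynomial
evaluated at q. -/
noncomputable def qBinom (q : ℂ) (N j : ℕ) : ℂ :=
  qPoch q q N / (qPoch q q j * qPoch q q (N - j))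

private lemma aux_subset_range {s : Finset ℕ} {n : ℕ} (h : s.sum id = n) :
    s ⊆ Finset.range (n + 1) := by
  intro x hx
  simp only [Finset.mem_range, Nat.lt_succ_iff]
  calc x = id x := rfl
    _ ≤ s.sum id := Finset.single_le_sum (fun i _ => Nat.zero_le _) hx
    _ = n := h

private lemma aux_card_le {s : Finset ℕ} {n : ℕ} (h0 : 0 ∉ s) (h : s.sum id = n) :
    s.card ≤ n := by
  have h1 : s.card = s.sum (fun _ => 1) := by simp
  rw [h1, ← h]
  exact Finset.sum_le_sum fun i hi =>
    Nat.one_le_iff_ne_zero.2 (fun he => h0 (he ▸ hi))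

private lemma aux_rafts_empty {s : Finset ℕ} [DecidablePred fun r => r + 1 ∈ s ∧ r + 2 ∉ s] :
    (∀ x ∈ s, x + 1 ∉ s) ↔ s.filter (fun r => r + 1 ∈ s ∧ r + 2 ∉ s) = ∅ := by
  rw [Finset.filter_eq_empty_iff]
  constructor
  · rintro h r hr ⟨h1, _⟩
    exact h r hr h1
  · intro h x hx hx1
    classical
    set T := s.filter (fun r => r + 1 ∈ s) with hT
    have hxT : x ∈ T := by simp [hT, hx, hx1]
    have hTne : T.Nonempty := ⟨x, hxT⟩
    set m := T.max' hTne with hm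
    have hmT : m ∈ T := T.max'_mem hTne
    have hms : m ∈ s := (Finset.mem_filter.1 hmT).1
    have hm1 : m + 1 ∈ s := (Finset.mem_filter.1 hmT).2
    have hm2 : m + 2 ∉ s := by
      intro hm2
      have : m + 1 ∈ T := by
        simp only [hT, Finset.mem_filter]
        exact ⟨hm1, hm2⟩
      have := T.le_max' _ this
      omega
    exact h hms ⟨hm1, hm2⟩

/-- Inclusion-exclusion on designated rafts: the alternating sum of the raft
counts equals the number of partitions into distinct non-consecutive parts. -/
theorem inclusion_exclusion_rafts (p : ℕ → ℕ → ℕ)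
    (hp : ∀ k n, p k n = Nat.card {pr : Finset ℕ × Finset ℕ //
      0 ∉ pr.1 ∧ pr.1.sum id = n ∧ pr.2.card = k ∧
      (∀ r ∈ pr.2, r ∈ pr.1 ∧ r + 1 ∈ pr.1 ∧ r + 2 ∉ pr.1)})
    (r : ℕ → ℕ)
    (hr : ∀ n, r n = Nat.card {s : Finset ℕ //
      0 ∉ s ∧ s.sum id = n ∧ ∀ x ∈ s, x + 1 ∉ s})
    (n : ℕ) :
    ∑' k : ℕ, ((-1 : ℤ) ^ k * (p k n : ℤ)) = (r n : ℤ) := by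
  classical
  set rafts : Finset ℕ → Finset ℕ :=
    fun s => s.filter (fun x => x + 1 ∈ s ∧ x + 2 ∉ s) with hrafts
  set L : Finset (Finset ℕ) :=
    ((Finset.range (n + 1)).powerset).filter (fun s => 0 ∉ s ∧ s.sum id = n) with hLdef
  set A : Finset (Finset ℕ × Finset ℕ) :=
    (((Finset.range (n + 1)).powerset) ×ˢ ((Finset.range (n + 1)).powerset)).filter
      (fun pr => 0 ∉ pr.1 ∧ pr.1.sum id = n ∧
        ∀ x ∈ pr.2, x ∈ pr.1 ∧ x + 1 ∈ pr.1 ∧ x + 2 ∉ pr.1) with hAdef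
  have hmemA : ∀ pr : Finset ℕ × Finset ℕ, pr ∈ A ↔
      (0 ∉ pr.1 ∧ pr.1.sum id = n ∧
        ∀ x ∈ pr.2, x ∈ pr.1 ∧ x + 1 ∈ pr.1 ∧ x + 2 ∉ pr.1) := by
    intro pr
    simp only [hAdef, Finset.mem_filter, Finset.mem_product, Finset.mem_powerset,
      and_iff_right_iff_imp]
    rintro ⟨h0, hsum, hraft⟩
    have h1 : pr.1 ⊆ Finset.range (n + 1) := aux_subset_range hsum
    exact ⟨h1, fun x hx => h1 ((hraft x hx).1)⟩
  -- p k n as a finset card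
  have hpk : ∀ k, p k n = (A.filter (fun pr => pr.2.card = k)).card := by
    intro k
    rw [hp, ← Set.ncard_coe_finset, ← Nat.card_coe_set_eq]
    refine Nat.card_congr (Equiv.subtypeEquivRight fun pr => ?_)
    simp only [Finset.coe_filter, Set.mem_setOf_eq, hmemA pr]
    tauto
  -- vanishing for large k
  have hpk0 : ∀ k, n < k → p k n = 0 := by
    intro k hk
    rw [hpk]
    convert Finset.card_empty
    rw [Finset.filter_eq_empty_iff]
    intro pr hpr
    obtain ⟨h0, hsum, hraft⟩ := (hmemA pr).1 hpr
    have hsub : pr.2 ⊆ pr.1 := fun x hx => (hraft x hx).1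
    have : pr.2.card ≤ n :=
      le_trans (Finset.card_le_card hsub) (aux_card_le h0 hsum)
    omega
  -- reduce tsum to finite sum
  rw [tsum_eq_sum (s := Finset.range (n + 1))
    (fun k hk => by
      rw [hpk0 k (by simpa using hk)]
      simp)]
  -- fiberwise over the number of designated rafts
  have hmaps : ∀ pr ∈ A, pr.2.card ∈ Finset.range (n + 1) := by
    intro pr hpr
    obtain ⟨h0, hsum, hraft⟩ := (hmemA pr).1 hpr
    have hsub : pr.2 ⊆ pr.1 := fun x hx => (hraft x hx).1
    have := le_trans (Finset.card_le_card hsub) (aux_card_le h0 hsum)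
    simp only [Finset.mem_range]
    omega
  have hfib : ∑ k ∈ Finset.range (n + 1), ((-1 : ℤ) ^ k * (p k n : ℤ))
      = ∑ pr ∈ A, (-1 : ℤ) ^ pr.2.card := by
    rw [← Finset.sum_fiberwise_of_maps_to hmaps (fun pr => (-1 : ℤ) ^ pr.2.card)]
    refine Finset.sum_congr rfl fun k _ => ?_
    rw [hpk k]
    rw [Finset.sum_congr rfl
      (fun pr hpr => by rw [(Finset.mem_filter.1 hpr).2] :
        ∀ pr ∈ A.filter (fun pr => pr.2.card = k),
          (-1 : ℤ) ^ pr.2.card = (-1 : ℤ) ^ k)]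
    rw [Finset.sum_const, nsmul_eq_mul, mul_comm]
  rw [hfib]
  -- fiberwise over the partition
  have hmaps1 : ∀ pr ∈ A, pr.1 ∈ L := by
    intro pr hpr
    obtain ⟨h0, hsum, _⟩ := (hmemA pr).1 hpr
    simp only [hLdef, Finset.mem_filter, Finset.mem_powerset]
    exact ⟨aux_subset_range hsum, h0, hsum⟩
  rw [← Finset.sum_fiberwise_of_maps_to hmaps1 (fun pr => (-1 : ℤ) ^ pr.2.card)]
  -- identify each fiber
  have hfiber : ∀ s ∈ L, A.filter (fun pr => pr.1 = s)
      = ((rafts s).powerset).image (fun R => (s, R)) := by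
    intro s hs
    obtain ⟨hsr, h0, hsum⟩ : s ⊆ Finset.range (n + 1) ∧ 0 ∉ s ∧ s.sum id = n := by
      simpa [hLdef] using hs
    ext pr
    simp only [Finset.mem_filter, Finset.mem_image, Finset.mem_powerset, hmemA pr]
    constructor
    · rintro ⟨⟨-, -, hraft⟩, h1⟩
      refine ⟨pr.2, ?_, ?_⟩
      · intro x hx
        obtain ⟨hx1, hx2, hx3⟩ := hraft x hx
        rw [h1] at hx1 hx2 hx3
        simp only [hrafts, Finset.mem_filter]
        exact ⟨hx1, hx2, hx3⟩
      · rw [← h1]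
    · rintro ⟨R, hR, hpr⟩
      subst hpr
      refine ⟨⟨h0, hsum, fun x hx => ?_⟩, rfl⟩
      have := hR hx
      simp only [hrafts, Finset.mem_filter] at this
      exact ⟨this.1, this.2.1, this.2.2⟩
  calc ∑ s ∈ L, ∑ pr ∈ A.filter (fun pr => pr.1 = s), (-1 : ℤ) ^ pr.2.card
      = ∑ s ∈ L, (if rafts s = ∅ then (1 : ℤ) else 0) := by
        refine Finset.sum_congr rfl fun s hs => ?_
        rw [hfiber s hs, Finset.sum_image (by intro a _ b _ h; simpa using h)]
        simpa using Finset.sum_powerset_neg_one_pow_card (x := rafts s)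
    _ = ((L.filter (fun s => rafts s = ∅)).card : ℤ) := by
        rw [Finset.sum_boole]
    _ = (r n : ℤ) := by
        rw [hr, ← Set.ncard_coe_finset, ← Nat.card_coe_set_eq]
        congr 1
        refine Nat.card_congr (Equiv.subtypeEquivRight fun s => ?_)
        simp only [Finset.coe_filter, Set.mem_setOf_eq, hLdef, Finset.mem_filter,
          Finset.mem_powerset, hrafts]
        rw [← aux_rafts_empty]
        constructor
        · rintro ⟨⟨-, h0, hsum⟩, hcons⟩
          exact ⟨h0, hsum, hcons⟩
        · rintro ⟨h0, hsum, hcons⟩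
          exact ⟨⟨aux_subset_range hsum, h0, hsum⟩, hcons⟩
end

section
/- For every integer k ≥ 1 and every complex number q with 0 < |q| < 1, ∑_{m=0}^{∞} q^{m(m−1)/2 + (2k+1)m} · (q^k;q)_m / ((q;q)_m · (−q^{3k+1};q)_m) = (−q^{2k+1};q)_∞ / (−q^{3k+1};q)_∞. -/
/-!
Multiplying the `m`-th term by `(-az;q)_∞ = (-az;q)_m (-azq^m;q)_∞` and expanding
`(-azq^m;q)_∞` by Euler's identity `(-w;q)_∞ = ∑ₙ q^C(n,2) wⁿ / (q;q)ₙ` turns the left-hand side,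
times `(-az;q)_∞`, into an absolutely convergent double series. Since
`C(m,2) + C(n,2) + mn = C(m+n,2)`, its terms with `m + n = N` add up to
`q^C(N,2) z^N ∑_{m+n=N} (a;q)_m aⁿ / ((q;q)_m (q;q)ₙ) = q^C(N,2) z^N / (q;q)_N`, and Euler's
identity once more gives `(-z;q)_∞`. The theorem is the case `a = q^k`, `z = q^(2k+1)`.

Euler's identity itself comes from the functional equation `E(z) = (1 + z) E(qz)` of its left-hand
side `E`, iterated `N` times, since `E(zq^N) → E(0) = 1`.
-/

open Finset

open Filter Topology

section QPochhammer

variable {a q : ℂ}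

lemma qPoch_zero (a q : ℂ) : qPoch a q 0 = 1 := prod_range_zero _

lemma qPoch_succ (a q : ℂ) (n : ℕ) : qPoch a q (n + 1) = qPoch a q n * (1 - a * q ^ n) :=
  prod_range_succ _ _

lemma summable_norm_mul_pow (a : ℂ) (hq : ‖q‖ < 1) : Summable fun j : ℕ ↦ ‖a * q ^ j‖ := by
  simpa [norm_mul, norm_pow] using (summable_geometric_of_lt_one (norm_nonneg q) hq).mul_left ‖a‖

lemma multipliable_qPoch (a : ℂ) (hq : ‖q‖ < 1) : Multipliable fun j : ℕ ↦ 1 - a * q ^ j := by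
  simpa [sub_eq_add_neg] using
    Complex.multipliable_one_add_of_summable (summable_norm_mul_pow a hq).of_norm.neg

lemma tendsto_qPoch (a : ℂ) (hq : ‖q‖ < 1) :
    Tendsto (qPoch a q) atTop (𝓝 (qPochInf a q)) :=
  (multipliable_qPoch a hq).hasProd.tendsto_prod_nat

lemma one_sub_mul_pow_ne_zero (ha : ‖a‖ < 1) (hq : ‖q‖ ≤ 1) (j : ℕ) : 1 - a * q ^ j ≠ 0 := by
  refine sub_ne_zero.2 fun h ↦ ?_
  have : ‖a * q ^ j‖ < 1 := by
    rw [norm_mul, norm_pow]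
    exact mul_lt_one_of_nonneg_of_lt_one_left (norm_nonneg a) ha (pow_le_one₀ (norm_nonneg q) hq)
  simp [← h] at this

lemma qPoch_ne_zero (ha : ‖a‖ < 1) (hq : ‖q‖ ≤ 1) (n : ℕ) : qPoch a q n ≠ 0 :=
  prod_ne_zero_iff.2 fun j _ ↦ one_sub_mul_pow_ne_zero ha hq j

lemma qPochInf_ne_zero (ha : ‖a‖ < 1) (hq : ‖q‖ < 1) : qPochInf a q ≠ 0 := by
  simpa [qPochInf, sub_eq_add_neg] using tprod_one_add_ne_zero_of_summable
    (f := fun j ↦ -(a * q ^ j)) (by simpa [sub_eq_add_neg] using one_sub_mul_pow_ne_zero ha hq.le)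
    (by simpa using summable_norm_mul_pow a hq)

lemma qPochInf_eq_qPoch_mul (a : ℂ) (hq : ‖q‖ < 1) (m : ℕ) :
    qPochInf a q = qPoch a q m * qPochInf (a * q ^ m) q := by
  have hshift : (fun j ↦ 1 - a * q ^ (j + m)) = fun j ↦ 1 - a * q ^ m * q ^ j := by
    ext j; ring
  have hmul : Multipliable fun j ↦ 1 - a * q ^ (j + m) := by
    rw [hshift]; exact multipliable_qPoch _ hq
  rw [qPochInf, ← Multipliable.prod_mul_tprod_nat_mul' (f := fun j ↦ 1 - a * q ^ j) hmul, hshift,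
    qPoch, qPochInf]

lemma exists_norm_qPoch_le (a : ℂ) (hq : ‖q‖ < 1) : ∃ C, ∀ n, ‖qPoch a q n‖ ≤ C := by
  obtain ⟨C, hC⟩ := (tendsto_qPoch a hq).norm.bddAbove_range
  exact ⟨C, fun n ↦ hC ⟨n, rfl⟩⟩

lemma exists_norm_inv_qPoch_le (hq : ‖q‖ < 1) : ∃ C, ∀ n, ‖(qPoch q q n)⁻¹‖ ≤ C := by
  obtain ⟨C, hC⟩ :=
    ((tendsto_qPoch q hq).inv₀ (qPochInf_ne_zero hq hq)).norm.bddAbove_range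
  exact ⟨C, fun n ↦ hC ⟨n, rfl⟩⟩

end QPochhammer

noncomputable def eulerTerm (q z : ℂ) (n : ℕ) : ℂ := q ^ n.choose 2 * z ^ n / qPoch q q n

section Euler

variable {q z : ℂ}

lemma continuous_eulerTerm (q : ℂ) (n : ℕ) : Continuous fun z ↦ eulerTerm q z n := by
  unfold eulerTerm; fun_prop

lemma norm_eulerTerm_le {C : ℝ} (hq : ‖q‖ ≤ 1) (hC : ∀ n, ‖(qPoch q q n)⁻¹‖ ≤ C) (z : ℂ)
    (n : ℕ) : ‖eulerTerm q z n‖ ≤ C * ‖z‖ ^ n := by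
  rw [eulerTerm, div_eq_mul_inv, norm_mul, norm_mul, norm_pow, norm_pow]
  calc ‖q‖ ^ n.choose 2 * ‖z‖ ^ n * ‖(qPoch q q n)⁻¹‖ ≤ 1 * ‖z‖ ^ n * C := by
        gcongr
        · exact pow_le_one₀ (norm_nonneg q) hq
        · exact hC n
    _ = C * ‖z‖ ^ n := by ring

lemma summable_eulerTerm (hq : ‖q‖ < 1) (hz : ‖z‖ < 1) : Summable (eulerTerm q z) := by
  obtain ⟨C, hC⟩ := exists_norm_inv_qPoch_le hq
  exact .of_norm_bounded ((summable_geometric_of_lt_one (norm_nonneg z) hz).mul_left C)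
    (norm_eulerTerm_le hq.le hC z)

lemma eulerTerm_succ_sub (hq : ‖q‖ < 1) (z : ℂ) (n : ℕ) :
    eulerTerm q z (n + 1) - eulerTerm q (z * q) (n + 1) = z * eulerTerm q (z * q) n := by
  have h₁ := qPoch_ne_zero hq hq.le n
  have h₂ : 1 - q * q ^ n ≠ 0 := one_sub_mul_pow_ne_zero hq hq.le n
  simp only [eulerTerm, qPoch_succ, Nat.choose_succ_succ', Nat.choose_one_right]
  field_simp
  ring

lemma tsum_eulerTerm_eq_one_add_mul (hq : ‖q‖ < 1) (hz : ‖z‖ < 1) :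
    ∑' n, eulerTerm q z n = (1 + z) * ∑' n, eulerTerm q (z * q) n := by
  have hzq : ‖z * q‖ < 1 := by
    rw [norm_mul]; exact mul_lt_one_of_nonneg_of_lt_one_left (norm_nonneg z) hz hq.le
  have hs := summable_eulerTerm hq hz
  have hs' := summable_eulerTerm hq hzq
  have h := (hs.sub hs').tsum_eq_zero_add
  have h0 : eulerTerm q z 0 - eulerTerm q (z * q) 0 = 0 := by simp [eulerTerm]
  simp only [hs.tsum_sub hs', eulerTerm_succ_sub hq, tsum_mul_left, h0] at h
  linear_combination h

lemma tsum_eulerTerm_eq_qPoch_mul (hq : ‖q‖ < 1) (hz : ‖z‖ < 1) (N : ℕ) :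
    ∑' n, eulerTerm q z n = qPoch (-z) q N * ∑' n, eulerTerm q (z * q ^ N) n := by
  induction N with
  | zero => simp [qPoch_zero]
  | succ N ih =>
    have hzN : ‖z * q ^ N‖ < 1 := by
      rw [norm_mul, norm_pow]
      exact mul_lt_one_of_nonneg_of_lt_one_left (norm_nonneg z) hz
        (pow_le_one₀ (norm_nonneg q) hq.le)
    rw [ih, tsum_eulerTerm_eq_one_add_mul hq hzN, qPoch_succ, pow_succ, mul_assoc z]
    ring

lemma tendsto_tsum_eulerTerm_mul_pow (hq : ‖q‖ < 1) (hz : ‖z‖ < 1) :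
    Tendsto (fun N : ℕ ↦ ∑' n, eulerTerm q (z * q ^ N) n) atTop (𝓝 1) := by
  obtain ⟨C, hC⟩ := exists_norm_inv_qPoch_le hq
  have hC0 : 0 ≤ C := (norm_nonneg _).trans (hC 0)
  have hzero : ∑' n, eulerTerm q 0 n = 1 := by
    rw [tsum_eq_single 0 fun n hn ↦ by simp [eulerTerm, hn]]
    simp [eulerTerm, qPoch_zero]
  have hlim : Tendsto (fun N : ℕ ↦ z * q ^ N) atTop (𝓝 0) := by
    simpa using (tendsto_pow_atTop_nhds_zero_of_norm_lt_one hq).const_mul z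
  rw [← hzero]
  refine tendsto_tsum_of_dominated_convergence
    ((summable_geometric_of_lt_one (norm_nonneg z) hz).mul_left C)
    (fun n ↦ ((continuous_eulerTerm q n).tendsto 0).comp hlim) (.of_forall fun N n ↦ ?_)
  refine (norm_eulerTerm_le hq.le hC _ n).trans ?_
  gcongr
  rw [norm_mul, norm_pow]
  exact mul_le_of_le_one_right (norm_nonneg z) (pow_le_one₀ (norm_nonneg q) hq.le)

theorem tsum_eulerTerm (hq : ‖q‖ < 1) (hz : ‖z‖ < 1) :
    ∑' n, eulerTerm q z n = qPochInf (-z) q := by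
  have h := (tendsto_qPoch (-z) hq).mul (tendsto_tsum_eulerTerm_mul_pow hq hz)
  rw [mul_one] at h
  exact tendsto_nhds_unique
    (tendsto_const_nhds.congr (tsum_eulerTerm_eq_qPoch_mul hq hz)) h

end Euler

lemma Nat.choose_two_add (m n : ℕ) : (m + n).choose 2 = m.choose 2 + n.choose 2 + m * n := by
  induction n with
  | zero => simp
  | succ n ih =>
    rw [← add_assoc, Nat.choose_succ_succ', Nat.choose_succ_succ' n, ih, Nat.choose_one_right,
      Nat.choose_one_right]
    ring

theorem Summable.tsum_eq_tsum_sum_antidiagonal {M A : Type*} [AddCommMonoid M]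
    [TopologicalSpace M] [ContinuousAdd M] [T3Space M] [AddCommMonoid A] [HasAntidiagonal A]
    {f : A × A → M} (hf : Summable f) : ∑' p, f p = ∑' n, ∑ p ∈ antidiagonal n, f p := by
  rw [← HasAntidiagonal.sigmaAntidiagonalEquivProd.tsum_eq]
  refine (Summable.tsum_sigma' (fun n ↦ (hasSum_fintype _).summable)
      (HasAntidiagonal.sigmaAntidiagonalEquivProd.summable_iff.2 hf)).trans ?_
  exact tsum_congr fun n ↦ Finset.tsum_subtype _ f

section QGauss

variable {a q z : ℂ}

theorem sum_antidiagonal_qPoch_div_mul_pow_div (a : ℂ) (hq : ‖q‖ < 1) (N : ℕ) :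
    ∑ p ∈ antidiagonal N, qPoch a q p.1 / qPoch q q p.1 * (a ^ p.2 / qPoch q q p.2) =
      (qPoch q q N)⁻¹ := by
  set u : ℕ → ℂ := fun m ↦ qPoch a q m / qPoch q q m
  set v : ℕ → ℂ := fun n ↦ a ^ n / qPoch q q n
  have hu (m : ℕ) : (1 - q ^ (m + 1)) * u (m + 1) = (1 - a * q ^ m) * u m := by
    have := qPoch_ne_zero hq hq.le m
    have := one_sub_mul_pow_ne_zero hq hq.le m
    simp only [u, qPoch_succ, pow_succ']
    field_simp
  have hv (n : ℕ) : (1 - q ^ (n + 1)) * v (n + 1) = a * v n := by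
    have := qPoch_ne_zero hq hq.le n
    have := one_sub_mul_pow_ne_zero hq hq.le n
    simp only [v, qPoch_succ, pow_succ']
    field_simp
  show ∑ p ∈ antidiagonal N, u p.1 * v p.2 = _
  induction N with
  | zero => simp [u, v, qPoch_zero]
  | succ N ih =>
    -- `1 - q ^ (m + n) = (1 - q ^ m) + q ^ m * (1 - q ^ n)`, and each part lowers `m` or `n`.
    have hrec : (1 - q ^ (N + 1)) * ∑ p ∈ antidiagonal (N + 1), u p.1 * v p.2 =
        ∑ p ∈ antidiagonal N, u p.1 * v p.2 := calc
      _ = ∑ p ∈ antidiagonal (N + 1), (1 - q ^ p.1) * u p.1 * v p.2 +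
            ∑ p ∈ antidiagonal (N + 1), q ^ p.1 * ((1 - q ^ p.2) * v p.2) * u p.1 := by
        rw [mul_sum, ← sum_add_distrib]
        refine sum_congr rfl fun p hp ↦ ?_
        rw [← mem_antidiagonal.1 hp, pow_add]
        ring
      _ = ∑ p ∈ antidiagonal N,
            ((1 - a * q ^ p.1) * u p.1 * v p.2 + q ^ p.1 * (a * v p.2) * u p.1) := by
        rw [Finset.Nat.sum_antidiagonal_succ, Finset.Nat.sum_antidiagonal_succ']
        simp only [pow_zero, sub_self, zero_mul, mul_zero, zero_add, hu, hv, ← sum_add_distrib]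
      _ = ∑ p ∈ antidiagonal N, u p.1 * v p.2 := sum_congr rfl fun p _ ↦ by ring
    have : 1 - q ^ (N + 1) ≠ 0 := by simpa [pow_succ'] using one_sub_mul_pow_ne_zero hq hq.le N
    rw [ih] at hrec
    rw [qPoch_succ, mul_inv, ← hrec, ← pow_succ']
    field_simp

noncomputable def qGaussTerm (a q z : ℂ) (p : ℕ × ℕ) : ℂ :=
  q ^ p.1.choose 2 * z ^ p.1 * qPoch a q p.1 / qPoch q q p.1 * eulerTerm q (a * z * q ^ p.1) p.2

lemma sum_antidiagonal_qGaussTerm (a z : ℂ) (hq : ‖q‖ < 1) (N : ℕ) :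
    ∑ p ∈ antidiagonal N, qGaussTerm a q z p = eulerTerm q z N := by
  have hterm : ∀ p ∈ antidiagonal N, qGaussTerm a q z p = q ^ N.choose 2 * z ^ N *
      (qPoch a q p.1 / qPoch q q p.1 * (a ^ p.2 / qPoch q q p.2)) := fun p hp ↦ by
    rw [← mem_antidiagonal.1 hp, Nat.choose_two_add, qGaussTerm, eulerTerm]
    simp only [pow_add, mul_pow, pow_mul]
    ring
  rw [sum_congr rfl hterm, ← mul_sum, sum_antidiagonal_qPoch_div_mul_pow_div a hq, eulerTerm,
    div_eq_mul_inv]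

lemma summable_qGaussTerm (hq : ‖q‖ < 1) (hz : ‖z‖ < 1) (haz : ‖a * z‖ < 1) :
    Summable (qGaussTerm a q z) := by
  obtain ⟨A, hA⟩ := exists_norm_qPoch_le a hq
  obtain ⟨C, hC⟩ := exists_norm_inv_qPoch_le hq
  have hA0 : 0 ≤ A := (norm_nonneg _).trans (hA 0)
  have hC0 : 0 ≤ C := (norm_nonneg _).trans (hC 0)
  have hbound (p : ℕ × ℕ) :
      ‖qGaussTerm a q z p‖ ≤ A * C * ‖z‖ ^ p.1 * (C * ‖a * z‖ ^ p.2) := by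
    have hrow : ‖q ^ p.1.choose 2 * z ^ p.1 * qPoch a q p.1 / qPoch q q p.1‖ ≤
        A * C * ‖z‖ ^ p.1 := by
      rw [div_eq_mul_inv, norm_mul, norm_mul, norm_mul, norm_pow, norm_pow]
      calc _ ≤ 1 * ‖z‖ ^ p.1 * A * C := by
            gcongr
            exacts [pow_le_one₀ (norm_nonneg q) hq.le, hA _, hC _]
        _ = A * C * ‖z‖ ^ p.1 := by ring
    have hcol : ‖eulerTerm q (a * z * q ^ p.1) p.2‖ ≤ C * ‖a * z‖ ^ p.2 := by
      refine (norm_eulerTerm_le hq.le hC _ _).trans ?_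
      gcongr
      rw [norm_mul (a * z), norm_pow]
      exact mul_le_of_le_one_right (norm_nonneg _) (pow_le_one₀ (norm_nonneg q) hq.le)
    rw [qGaussTerm, norm_mul]
    exact mul_le_mul hrow hcol (norm_nonneg _) ((norm_nonneg _).trans hrow)
  refine .of_norm_bounded (.mul_of_nonneg
    ((summable_geometric_of_lt_one (norm_nonneg z) hz).mul_left (A * C))
    ((summable_geometric_of_lt_one (norm_nonneg _) haz).mul_left C)
    (fun _ ↦ by positivity) (fun _ ↦ by positivity)) hbound

lemma tsum_qGaussTerm_div_qPochInf (hq : ‖q‖ < 1) (haz : ‖a * z‖ < 1) (m : ℕ) :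
    (∑' n, qGaussTerm a q z (m, n)) / qPochInf (-(a * z)) q =
      q ^ m.choose 2 * z ^ m * qPoch a q m / (qPoch q q m * qPoch (-(a * z)) q m) := by
  have hazm : ‖a * z * q ^ m‖ < 1 := by
    rw [norm_mul _ (q ^ m), norm_pow]
    exact mul_lt_one_of_nonneg_of_lt_one_left (norm_nonneg _) haz
      (pow_le_one₀ (norm_nonneg q) hq.le)
  have hne : qPochInf (-(a * z * q ^ m)) q ≠ 0 := qPochInf_ne_zero (by rwa [norm_neg]) hq
  simp only [qGaussTerm]
  rw [tsum_mul_left, tsum_eulerTerm hq hazm, qPochInf_eq_qPoch_mul (-(a * z)) hq m, neg_mul,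
    mul_div_mul_right _ _ hne, div_div]

theorem qGauss_limit (hq : ‖q‖ < 1) (hz : ‖z‖ < 1) (haz : ‖a * z‖ < 1) :
    ∑' m, q ^ m.choose 2 * z ^ m * qPoch a q m / (qPoch q q m * qPoch (-(a * z)) q m) =
      qPochInf (-z) q / qPochInf (-(a * z)) q := by
  have hF := summable_qGaussTerm hq hz haz
  simp_rw [← tsum_qGaussTerm_div_qPochInf hq haz]
  rw [tsum_div_const, ← hF.tsum_prod, hF.tsum_eq_tsum_sum_antidiagonal,
    tsum_congr (sum_antidiagonal_qGaussTerm a z hq), tsum_eulerTerm hq hz]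

end QGauss

theorem qGauss_step_general (k : ℕ) (q : ℂ) (hq : ‖q‖ < 1) :
    ∑' m : ℕ, q ^ (m * (m - 1) / 2 + (2 * k + 1) * m) * qPoch (q ^ k) q m /
        (qPoch q q m * qPoch (-(q ^ (3 * k + 1))) q m) =
      qPochInf (-(q ^ (2 * k + 1))) q / qPochInf (-(q ^ (3 * k + 1))) q := by
  have hpow (n : ℕ) : ‖q ^ (n + 1)‖ < 1 := by
    rw [norm_pow]; exact pow_lt_one₀ (norm_nonneg q) hq n.succ_ne_zero
  have h3k : q ^ (3 * k + 1) = q ^ k * q ^ (2 * k + 1) := by rw [← pow_add]; ring_nf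
  rw [h3k, ← qGauss_limit hq (hpow _) (h3k ▸ hpow _)]
  refine tsum_congr fun m ↦ ?_
  rw [← Nat.choose_two_right, pow_add, pow_mul]

/-- The q-Gauss summation step (a limiting case used in the proof of
Slater's identity No. 19). -/
theorem qGauss_step (k : ℕ) (hk : 1 ≤ k) (q : ℂ) (hq0 : q ≠ 0)
    (hq : ‖q‖ < 1) :
    ∑' m : ℕ, q ^ (m * (m - 1) / 2 + (2 * k + 1) * m) * qPoch (q ^ k) q m /
        (qPoch q q m * qPoch (-(q ^ (3 * k + 1))) q m) =
      qPochInf (-(q ^ (2 * k + 1))) q / qPochInf (-(q ^ (3 * k + 1))) q :=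
  qGauss_step_general k q hq
end

section
/- For n, l ≥ 0 and k ≥ 0, let p_k(n, l) be the number of pairs (λ, R) where λ is a partition of n into exactly l distinct positive parts and R is a k-element set of rafts of λ, and let r(n, l) be the number of partitions of n into exactly l distinct positive parts no two of which are consecutive integers. Then for all n, l ≥ 0, ∑_{k=0}^{∞} (−1)^k p_k(n, l) = r(n, l). (The sum is finite since p_k(n, l) = 0 for all sufficiently large k.) -/
open Finset

/-!
Counting the pairs `(λ, R)` fibrewise over `λ`, a partition with `m` rafts contributes
`∑ₖ (-1)ᵏ (m choose k)`, which is `1` if `m = 0` and `0` otherwise. A partition has no raft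
exactly when it has no two consecutive parts, since the largest `x` with `x, x + 1 ∈ λ` is a raft.
-/

theorem Nat.card_subtype_fst_mem_snd_mem_eq_sum {α β : Type*} (A : Finset α)
    (t : α → Finset β) :
    Nat.card {pr : α × β // pr.1 ∈ A ∧ pr.2 ∈ t pr.1} = ∑ a ∈ A, (t a).card := by
  rw [← Finset.card_sigma, ← Nat.card_eq_finsetCard]
  exact Nat.card_congr ((Equiv.sigmaEquivProd α β).symm.subtypeEquiv fun pr => by simp)

theorem hasSum_neg_one_pow_mul_choose (m : ℕ) :
    HasSum (fun k => (-1 : ℤ) ^ k * m.choose k) (if m = 0 then 1 else 0) := by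
  rw [← Int.alternating_sum_range_choose]
  refine hasSum_sum_of_ne_finset_zero fun k hk => ?_
  rw [Nat.choose_eq_zero_of_lt (by simpa using hk), Nat.cast_zero, mul_zero]

def rafts (s : Finset ℕ) : Finset ℕ := {x ∈ s | x + 1 ∈ s ∧ x + 2 ∉ s}

theorem subset_rafts_iff {s R : Finset ℕ} :
    R ⊆ rafts s ↔ ∀ x ∈ R, x ∈ s ∧ x + 1 ∈ s ∧ x + 2 ∉ s := by
  simp only [subset_iff, rafts, mem_filter]

theorem rafts_eq_empty_iff {s : Finset ℕ} : rafts s = ∅ ↔ ∀ x ∈ s, x + 1 ∉ s := by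
  refine ⟨fun h x hx hx1 => ?_, fun h => filter_eq_empty_iff.2 fun x hx hx1 => h x hx hx1.1⟩
  set T := {y ∈ s | y + 1 ∈ s}
  have hT : T.Nonempty := ⟨x, mem_filter.2 ⟨hx, hx1⟩⟩
  obtain ⟨hm, hm1⟩ := mem_filter.1 (T.max'_mem hT)
  have hm2 : T.max' hT + 2 ∉ s := fun h2 =>
    (T.le_max' _ (mem_filter.2 ⟨hm1, h2⟩)).not_gt (Nat.lt_succ_self _)
  exact filter_eq_empty_iff.1 h hm ⟨hm1, hm2⟩

def distinctPartitions (n l : ℕ) : Finset (Finset ℕ) :=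
  {s ∈ (range (n + 1)).powerset | 0 ∉ s ∧ s.sum id = n ∧ s.card = l}

theorem mem_distinctPartitions {n l : ℕ} {s : Finset ℕ} :
    s ∈ distinctPartitions n l ↔ 0 ∉ s ∧ s.sum id = n ∧ s.card = l := by
  refine ⟨fun h => (mem_filter.1 h).2, fun h => mem_filter.2 ⟨mem_powerset.2 fun x hx => ?_, h⟩⟩
  have : x ≤ s.sum id := single_le_sum (f := id) (fun _ _ => Nat.zero_le _) hx
  rw [mem_range]
  omega

theorem natCard_raftPairs_eq_sum_choose (k n l : ℕ) :
    Nat.card {pr : Finset ℕ × Finset ℕ //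
      0 ∉ pr.1 ∧ pr.1.sum id = n ∧ pr.1.card = l ∧ pr.2.card = k ∧
      (∀ r ∈ pr.2, r ∈ pr.1 ∧ r + 1 ∈ pr.1 ∧ r + 2 ∉ pr.1)} =
      ∑ s ∈ distinctPartitions n l, (rafts s).card.choose k := by
  simp_rw [← card_powersetCard, ← Nat.card_subtype_fst_mem_snd_mem_eq_sum, mem_powersetCard,
    mem_distinctPartitions, subset_rafts_iff]
  exact Nat.card_congr (Equiv.subtypeEquivRight fun pr => by tauto)

theorem natCard_noConsecutiveParts_eq_card_raftless (n l : ℕ) :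
    Nat.card {s : Finset ℕ // 0 ∉ s ∧ s.sum id = n ∧ s.card = l ∧ ∀ x ∈ s, x + 1 ∉ s} =
      #{s ∈ distinctPartitions n l | rafts s = ∅} := by
  rw [← Nat.card_eq_finsetCard]
  exact Nat.card_congr (Equiv.subtypeEquivRight fun s => by
    simp only [mem_filter, mem_distinctPartitions, rafts_eq_empty_iff, and_assoc])

/-- Refined inclusion-exclusion on designated rafts, keeping track of the
number of parts. -/
theorem inclusion_exclusion_rafts_two_var (p : ℕ → ℕ → ℕ → ℕ)
    (hp : ∀ k n l, p k n l = Nat.card {pr : Finset ℕ × Finset ℕ //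
      0 ∉ pr.1 ∧ pr.1.sum id = n ∧ pr.1.card = l ∧ pr.2.card = k ∧
      (∀ r ∈ pr.2, r ∈ pr.1 ∧ r + 1 ∈ pr.1 ∧ r + 2 ∉ pr.1)})
    (r : ℕ → ℕ → ℕ)
    (hr : ∀ n l, r n l = Nat.card {s : Finset ℕ //
      0 ∉ s ∧ s.sum id = n ∧ s.card = l ∧ ∀ x ∈ s, x + 1 ∉ s})
    (n l : ℕ) :
    ∑' k : ℕ, ((-1 : ℤ) ^ k * (p k n l : ℤ)) = (r n l : ℤ) := by
  have hasSum_fibrewise : HasSum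
      (fun k => ∑ s ∈ distinctPartitions n l, (-1 : ℤ) ^ k * (rafts s).card.choose k)
      (∑ s ∈ distinctPartitions n l, if (rafts s).card = 0 then 1 else 0) :=
    hasSum_sum fun s _ => hasSum_neg_one_pow_mul_choose _
  simp only [hp, natCard_raftPairs_eq_sum_choose, hr, natCard_noConsecutiveParts_eq_card_raftless,
    Nat.cast_sum, mul_sum, hasSum_fibrewise.tsum_eq, card_eq_zero, sum_boole]
end
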